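/- arXiv:2102.06924 — 2 statements merged into one kernel-verified Lean document; each statement's English description precedes it below -/
import Mathlib

section
/- AL regret decomposition: under the assumptions of the online min-max regret bound, the apprenticeship learning regret satisfies Reg_AL(K) = max_{c∈C} Σ_{k=1}^K ⟨c, d^{π_k} − d^E⟩ ≤ R^π_K + R^c_K + 2K·max_{c∈C} |⟨c, d^E − d̂^E⟩|. -/
open scoped RealInnerProductSpace

/-- AL regret decomposition (Lemma 2): under the assumptions of the online min-max
regret bound (policy-player regret `R^π_K`, cost-player regret `R^c_K` relative to the
estimated expert occupancy `d̂^E`, convex compact cost set `C`, expert occupancy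
`d^E = d^{π^E}`), the apprenticeship learning regret satisfies
`Reg_AL(K) = max_{c∈C} Σ_k ⟨c, d^{π_k} − d^E⟩ ≤ R^π_K + R^c_K
  + 2K·max_{c∈C}|⟨c, d^E − d̂^E⟩|`. -/
theorem al_regret_decomposition
    {E : Type*} [NormedAddCommGroup E] [InnerProductSpace ℝ E]
    [FiniteDimensional ℝ E]
    {P : Type*} [Fintype P] [Nonempty P] (d : P → E) (πE : P)
    (C : Set E) (hconv : Convex ℝ C) (hC : IsCompact C) (hne : C.Nonempty)
    (K : ℕ) (hK : 0 < K) (π : Fin K → P) (c : Fin K → E) (hc : ∀ k, c k ∈ C)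
    (dhatE : E) (Rπ Rc : ℝ) (hRπ : 0 ≤ Rπ) (hRc : 0 ≤ Rc)
    (hpolicy : ∑ k, ⟪c k, d (π k)⟫ ≤
      sInf ((fun π' => ∑ k, ⟪c k, d π'⟫) '' Set.univ) + Rπ)
    (hcost : sSup ((fun c' => ∑ k, ⟪c', d (π k) - dhatE⟫) '' C) ≤
      ∑ k, ⟪c k, d (π k) - dhatE⟫ + Rc) :
    sSup ((fun c' => ∑ k, ⟪c', d (π k) - d πE⟫) '' C) ≤
      Rπ + Rc + 2 * K * sSup ((fun c' => |⟪c', d πE - dhatE⟫|) '' C) := by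
  set M : ℝ := sSup ((fun c' => |⟪c', d πE - dhatE⟫|) '' C) with hMdef
  have habs_cont : Continuous fun c' : E => |⟪c', d πE - dhatE⟫| :=
    (Continuous.inner continuous_id continuous_const).abs
  have hMbdd : BddAbove ((fun c' => |⟪c', d πE - dhatE⟫|) '' C) :=
    (hC.image habs_cont).bddAbove
  have hM : ∀ c' ∈ C, |⟪c', d πE - dhatE⟫| ≤ M :=
    fun c' h => le_csSup hMbdd ⟨c', h, rfl⟩
  have hM0 : 0 ≤ M := by
    obtain ⟨c0, hc0⟩ := hne
    exact le_trans (abs_nonneg _) (hM c0 hc0)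
  -- bound sSup of the cost-player objective
  have hA_cont : Continuous fun c' : E => ∑ k, ⟪c', d (π k) - dhatE⟫ :=
    continuous_finset_sum _ fun k _ => Continuous.inner continuous_id continuous_const
  have hAbdd : BddAbove ((fun c' => ∑ k, ⟪c', d (π k) - dhatE⟫) '' C) :=
    (hC.image hA_cont).bddAbove
  -- sInf over policies is ≤ value at πE
  have hInf : sInf ((fun π' => ∑ k, ⟪c k, d π'⟫) '' Set.univ) ≤ ∑ k, ⟪c k, d πE⟫ :=
    csInf_le (Set.Finite.bddBelow (Set.toFinite _)) ⟨πE, Set.mem_univ _, rfl⟩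
  -- key bound:  ∑ ⟪c k, d (π k) - dhatE⟫ ≤ K * M + Rπ
  have hkey : ∑ k, ⟪c k, d (π k) - dhatE⟫ ≤ K * M + Rπ := by
    have h1 : ∑ k, ⟪c k, d (π k) - dhatE⟫
        = ∑ k, ⟪c k, d (π k)⟫ - ∑ k, ⟪c k, dhatE⟫ := by
      simp [inner_sub_right, Finset.sum_sub_distrib]
    have h2 : ∑ k, ⟪c k, d πE⟫ - ∑ k, ⟪c k, dhatE⟫ ≤ K * M := by
      have : ∑ k, ⟪c k, d πE⟫ - ∑ k, ⟪c k, dhatE⟫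
          = ∑ k : Fin K, ⟪c k, d πE - dhatE⟫ := by
        simp [inner_sub_right, Finset.sum_sub_distrib]
      rw [this]
      calc ∑ k : Fin K, ⟪c k, d πE - dhatE⟫
          ≤ ∑ _k : Fin K, M := by
            refine Finset.sum_le_sum fun k _ => ?_
            exact le_trans (le_abs_self _) (hM (c k) (hc k))
        _ = K * M := by simp [mul_comm]
    calc ∑ k, ⟪c k, d (π k) - dhatE⟫
        = ∑ k, ⟪c k, d (π k)⟫ - ∑ k, ⟪c k, dhatE⟫ := h1
      _ ≤ (sInf ((fun π' => ∑ k, ⟪c k, d π'⟫) '' Set.univ) + Rπ) - ∑ k, ⟪c k, dhatE⟫ := by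
            linarith
      _ ≤ (∑ k, ⟪c k, d πE⟫ + Rπ) - ∑ k, ⟪c k, dhatE⟫ := by linarith
      _ ≤ K * M + Rπ := by linarith
  refine Real.sSup_le ?_ (by positivity)
  rintro x ⟨c', hc', rfl⟩
  have hsplit : ∑ k, ⟪c', d (π k) - d πE⟫
      = (∑ k, ⟪c', d (π k) - dhatE⟫) + (K : ℝ) * ⟪c', dhatE - d πE⟫ := by
    have : ∀ k : Fin K, ⟪c', d (π k) - d πE⟫
        = ⟪c', d (π k) - dhatE⟫ + ⟪c', dhatE - d πE⟫ := by
      intro k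
      rw [← inner_add_right]
      congr 1
      abel
    rw [Finset.sum_congr rfl fun k _ => this k, Finset.sum_add_distrib]
    simp [mul_comm]
  have hA : ∑ k, ⟪c', d (π k) - dhatE⟫ ≤ ∑ k, ⟪c k, d (π k) - dhatE⟫ + Rc :=
    le_trans (le_csSup hAbdd ⟨c', hc', rfl⟩) hcost
  have hB : (K : ℝ) * ⟪c', dhatE - d πE⟫ ≤ K * M := by
    have h1 : ⟪c', dhatE - d πE⟫ = -⟪c', d πE - dhatE⟫ := by
      rw [← inner_neg_right]; congr 1; abel
    have h2 : ⟪c', dhatE - d πE⟫ ≤ M := by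
      rw [h1]; exact le_trans (neg_le_abs _) (hM c' hc')
    exact mul_le_mul_of_nonneg_left h2 (Nat.cast_nonneg K)
  dsimp only
  rw [hsplit]
  have : (2 : ℝ) * K * M = K * M + K * M := by ring
  linarith
end

section
/- L1 concentration of the empirical transition kernel: fix a state-action pair (s,a) and time h with transition distribution p_h(·|s,a) over S states. If p̄_h^k(·|s,a) is the empirical distribution formed from n ≥ 1 i.i.d. samples, then with probability at least 1 − δ, ‖p_h(·|s,a) − p̄_h(·|s,a)‖_1 ≤ √(4S·ln(3/δ)/n). -/
/-!
If `‖p - p̄‖₁ > ε`, then since both vectors sum to one, the set `A = {s | p̄ s < p s}` carries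
`p(A) - p̄(A) > ε / 2`. For a fixed `A`, `n (p(A) - p̄(A))` is a sum of `n` independent centred
variables with values in intervals of length one, so Hoeffding's inequality bounds the probability
of this event by `exp (-n ε² / 2) = (δ / 3) ^ (2S)`. A union bound over the `2 ^ S` subsets `A`
gives total failure probability at most `2 ^ S (δ / 3) ^ (2S) ≤ δ`.
-/

open MeasureTheory Finset Real ProbabilityTheory

lemma sum_abs_sub_eq_two_mul_sum_filter_lt {σ : Type*} [Fintype σ] {p r : σ → ℝ}
    (h : ∑ s, p s = ∑ s, r s) :
    ∑ s, |p s - r s| = 2 * ∑ s with r s < p s, (p s - r s) := by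
  have hmax : ∀ s, |p s - r s| = 2 * (if r s < p s then p s - r s else 0) - (p s - r s) := by
    intro s
    split_ifs with hs
    · rw [abs_of_pos (sub_pos.2 hs)]; ring
    · rw [abs_of_nonpos (by linarith [not_lt.1 hs])]; ring
  rw [sum_filter]
  simp only [hmax, sum_sub_distrib, ← mul_sum, h, sub_self, sub_zero]

lemma sum_card_filter_eq_sum_indicator {ι σ : Type*} [Fintype ι] [DecidableEq σ]
    (y : ι → σ) (A : Finset σ) :
    ∑ s ∈ A, (#{i | y i = s} : ℝ) = ∑ i, (A : Set σ).indicator 1 (y i) := by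
  simp only [card_filter, Nat.cast_sum, Nat.cast_ite, Nat.cast_one, Nat.cast_zero]
  rw [sum_comm]
  refine sum_congr rfl fun i _ => ?_
  simp [Set.indicator_apply, sum_ite_eq]

lemma exists_finset_mul_sum_abs_sub_empirical_eq {ι σ : Type*} [Fintype ι] [Nonempty ι]
    [Fintype σ] [DecidableEq σ] {p : σ → ℝ} (hp : ∑ s, p s = 1) (y : ι → σ) :
    ∃ A : Finset σ, Fintype.card ι * ∑ s, |p s - #{i | y i = s} / Fintype.card ι| =
      2 * ∑ i, (∑ s ∈ A, p s - (A : Set σ).indicator 1 (y i)) := by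
  set N : ℝ := (Fintype.card ι : ℝ)
  have hN : N ≠ 0 := Nat.cast_ne_zero.2 Fintype.card_ne_zero
  have hr : ∑ s, (#{i | y i = s} : ℝ) / N = 1 := by
    rw [← sum_div, sum_card_filter_eq_sum_indicator y univ, coe_univ, Set.indicator_univ]
    simp [N, hN]
  set A : Finset σ := {s | (#{i | y i = s} : ℝ) / N < p s}
  have hcount : ∑ i, (∑ s ∈ A, p s - (A : Set σ).indicator 1 (y i)) =
      N * ∑ s ∈ A, p s - ∑ s ∈ A, (#{i | y i = s} : ℝ) := by
    rw [sum_sub_distrib, sum_const, card_univ, nsmul_eq_mul, sum_card_filter_eq_sum_indicator]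
  refine ⟨A, ?_⟩
  rw [sum_abs_sub_eq_two_mul_sum_filter_lt (hp.trans hr.symm), hcount]
  change N * (2 * ∑ s ∈ A, _) = _
  rw [sum_sub_distrib, ← sum_div]
  field_simp

section Hoeffding

variable {Ω : Type*} [MeasurableSpace Ω] {μ : Measure Ω} [IsProbabilityMeasure μ]

lemma measureReal_sum_integral_sub_ge_le_of_mem_Icc {ι : Type*} [Fintype ι] {X : ι → Ω → ℝ}
    (hind : iIndepFun X μ) (hm : ∀ i, AEMeasurable (X i) μ)
    (hX : ∀ i, ∀ᵐ ω ∂μ, X i ω ∈ Set.Icc 0 1) {ε : ℝ} (hε : 0 ≤ ε) :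
    μ.real {ω | ε ≤ ∑ i, (μ[X i] - X i ω)} ≤ exp (-2 * ε ^ 2 / Fintype.card ι) := by
  have hsubG : ∀ i ∈ (univ : Finset ι),
      HasSubgaussianMGF (fun ω => μ[X i] - X i ω) (1 / 4) μ := by
    intro i _
    convert (hasSubgaussianMGF_of_mem_Icc (hm i) (hX i)).neg using 1
    · ext ω; simp
    · ext; norm_num
  have hind' : iIndepFun (fun i ω => μ[X i] - X i ω) μ :=
    hind.comp (fun i x => ∫ ω, X i ω ∂μ - x) fun _ => measurable_const.sub measurable_id
  convert HasSubgaussianMGF.measure_sum_ge_le_of_iIndepFun hind' hsubG hε using 2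
  simp only [sum_const, card_univ, nsmul_eq_mul, NNReal.coe_mul, NNReal.coe_natCast]
  push_cast
  ring

lemma measureReal_sum_sub_indicator_ge_le {ι σ : Type*} [Fintype ι] [MeasurableSpace σ]
    {Y : ι → Ω → σ} (hY : ∀ i, Measurable (Y i)) (hind : iIndepFun Y μ)
    {A : Set σ} (hA : MeasurableSet A) {q : ℝ} (hq : ∀ i, μ.real (Y i ⁻¹' A) = q)
    {ε : ℝ} (hε : 0 ≤ ε) :
    μ.real {ω | ε ≤ ∑ i, (q - A.indicator 1 (Y i ω))} ≤ exp (-2 * ε ^ 2 / Fintype.card ι) := by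
  have hmean : ∀ i, μ[fun ω => A.indicator (1 : σ → ℝ) (Y i ω)] = q := by
    intro i
    rw [← hq i, ← integral_indicator_one (hY i hA)]
    rfl
  have hoeffding := measureReal_sum_integral_sub_ge_le_of_mem_Icc (X := fun i ω => A.indicator (1 : σ → ℝ) (Y i ω))
    (hind.comp (fun _ => A.indicator 1) fun _ => measurable_const.indicator hA)
    (fun i => ((measurable_const.indicator hA).comp (hY i)).aemeasurable)
    (fun i => ae_of_all _ fun ω => ?_) hε
  · simpa only [hmean] using hoeffding
  · by_cases h : Y i ω ∈ A <;> simp [h]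

end Hoeffding

lemma two_pow_mul_div_three_pow_le {δ : ℝ} (hδ0 : 0 ≤ δ) (hδ1 : δ ≤ 1) {S : ℕ} (hS : S ≠ 0) :
    2 ^ S * (δ / 3) ^ (2 * S) ≤ δ :=
  calc 2 ^ S * (δ / 3) ^ (2 * S) = (2 * δ ^ 2 / 9) ^ S := by
        rw [pow_mul, ← mul_pow]; ring_nf
    _ ≤ 2 * δ ^ 2 / 9 := pow_le_of_le_one (by positivity) (by nlinarith) hS
    _ ≤ δ := by nlinarith

lemma exp_neg_two_mul_sq_sqrt_log_eq {n : ℝ} (hn : 0 < n) (S : ℕ) {δ : ℝ} (hδ0 : 0 < δ)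
    (hδ3 : δ ≤ 3) :
    exp (-2 * (n * √(4 * S * log (3 / δ) / n) / 2) ^ 2 / n) = (δ / 3) ^ (2 * S) := by
  have hlog : 0 ≤ log (3 / δ) := log_nonneg (by rw [le_div_iff₀ hδ0]; linarith)
  have hexponent : -2 * (n * √(4 * S * log (3 / δ) / n) / 2) ^ 2 / n =
      (2 * S : ℕ) * -log (3 / δ) := by
    rw [div_pow, mul_pow, sq_sqrt (by positivity)]
    push_cast
    field_simp
    ring
  rw [hexponent, exp_nat_mul, exp_neg, exp_log (by positivity), inv_div]

lemma ofReal_one_sub_le_measure_of_measureReal_compl_le {Ω : Type*} [MeasurableSpace Ω]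
    {μ : Measure Ω} [IsProbabilityMeasure μ] {s : Set Ω} {δ : ℝ} (h : μ.real sᶜ ≤ δ) :
    ENNReal.ofReal (1 - δ) ≤ μ s := by
  rw [ENNReal.ofReal_le_iff_le_toReal (measure_ne_top _ _), ← measureReal_def]
  have := measureReal_union_le (μ := μ) s sᶜ
  rw [Set.union_compl_self, probReal_univ] at this
  linarith

theorem empirical_distribution_l1_concentration_general
    {Ω : Type*} [MeasureSpace Ω] [IsProbabilityMeasure (volume : Measure Ω)]
    {σ : Type*} [Fintype σ] [DecidableEq σ] [MeasurableSpace σ]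
    [MeasurableSingletonClass σ]
    (n : ℕ) (hn : 1 ≤ n) (δ : ℝ) (hδ0 : 0 < δ) (hδ1 : δ < 1)
    (p : σ → ℝ) (hp1 : ∑ s, p s = 1)
    (Y : Fin n → Ω → σ) (hmeas : ∀ j, Measurable (Y j))
    (hindep : ProbabilityTheory.iIndepFun Y volume)
    (hlaw : ∀ j s, (volume {ω | Y j ω = s}).toReal = p s)
    (pbar : Ω → σ → ℝ)
    (hpbar : ∀ ω s, pbar ω s =
      ((Finset.univ.filter fun j => Y j ω = s).card : ℝ) / n) :
    ENNReal.ofReal (1 - δ) ≤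
      volume {ω | ∑ s, |p s - pbar ω s| ≤
        Real.sqrt (4 * (Fintype.card σ) * Real.log (3 / δ) / n)} := by
  have : Nonempty σ := by
    by_contra h
    simp [not_nonempty_iff.1 h] at hp1
  have : NeZero n := ⟨by omega⟩
  set ε := √(4 * Fintype.card σ * log (3 / δ) / n)
  set bad : Finset σ → Set Ω := fun A =>
    {ω | n * ε / 2 ≤ ∑ j, (∑ s ∈ A, p s - (A : Set σ).indicator 1 (Y j ω))}
  have hcover : {ω | ∑ s, |p s - pbar ω s| ≤ ε}ᶜ ⊆ ⋃ A ∈ (univ : Finset (Finset σ)), bad A := by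
    intro ω hω
    obtain ⟨A, hA⟩ := exists_finset_mul_sum_abs_sub_empirical_eq hp1 (Y · ω)
    simp only [Fintype.card_fin, ← hpbar] at hA
    simp only [Set.mem_compl_iff, Set.mem_ofPred_eq, not_le] at hω
    have hn0 : (0 : ℝ) < n := by exact_mod_cast hn
    exact Set.mem_biUnion (mem_univ A) (by simp only [bad, Set.mem_ofPred_eq]; nlinarith)
  have hbad : ∀ A : Finset σ, volume.real (bad A) ≤ (δ / 3) ^ (2 * Fintype.card σ) := by
    intro A
    refine (measureReal_sum_sub_indicator_ge_le hmeas hindep A.measurableSet (fun j => ?_)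
      (by positivity)).trans_eq ?_
    · rw [← sum_measureReal_preimage_singleton A fun s _ => hmeas j (measurableSet_singleton s)]
      exact sum_congr rfl fun s _ => hlaw j s
    · rw [Fintype.card_fin]
      exact exp_neg_two_mul_sq_sqrt_log_eq (by exact_mod_cast hn) _ hδ0 (by linarith)
  apply ofReal_one_sub_le_measure_of_measureReal_compl_le
  calc volume.real _ ≤ ∑ A : Finset σ, volume.real (bad A) :=
        (measureReal_mono hcover (measure_ne_top _ _)).trans (measureReal_biUnion_finset_le _ _)
    _ ≤ 2 ^ Fintype.card σ * (δ / 3) ^ (2 * Fintype.card σ) :=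
        (sum_le_sum fun A _ => hbad A).trans_eq (by simp)
    _ ≤ δ := two_pow_mul_div_three_pow_le hδ0.le hδ1.le Fintype.card_ne_zero

/-- L1 concentration of the empirical distribution (Weissman et al.): if `p̄` is the
empirical distribution formed from `n ≥ 1` i.i.d. samples `Y_1,…,Y_n` from a
distribution `p` over a finite set of size `S`, then with probability at least `1 − δ`,
`‖p − p̄‖₁ ≤ √(4S·ln(3/δ)/n)`. -/
theorem empirical_distribution_l1_concentration
    {Ω : Type*} [MeasureSpace Ω] [IsProbabilityMeasure (volume : Measure Ω)]
    {σ : Type*} [Fintype σ] [DecidableEq σ] [MeasurableSpace σ]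
    [MeasurableSingletonClass σ]
    (n : ℕ) (hn : 1 ≤ n) (δ : ℝ) (hδ0 : 0 < δ) (hδ1 : δ < 1)
    (p : σ → ℝ) (hp0 : ∀ s, 0 ≤ p s) (hp1 : ∑ s, p s = 1)
    (Y : Fin n → Ω → σ) (hmeas : ∀ j, Measurable (Y j))
    (hindep : ProbabilityTheory.iIndepFun Y volume)
    (hlaw : ∀ j s, (volume {ω | Y j ω = s}).toReal = p s)
    (pbar : Ω → σ → ℝ)
    (hpbar : ∀ ω s, pbar ω s =
      ((Finset.univ.filter fun j => Y j ω = s).card : ℝ) / n) :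
    ENNReal.ofReal (1 - δ) ≤
      volume {ω | ∑ s, |p s - pbar ω s| ≤
        Real.sqrt (4 * (Fintype.card σ) * Real.log (3 / δ) / n)} :=
  empirical_distribution_l1_concentration_general n hn δ hδ0 hδ1 p hp1 Y hmeas hindep hlaw pbar
    hpbar
end
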